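/- Implication step of the uncertainty relation proof: if 2^{-λ} I_Z ⊗ σ_{Z'AB} ≥ ρ_{ZZ'AB} for a state σ_{Z'AB}, then 2^{-λ}·c· I_X ⊗ σ_B ≥ ρ_XB, where ρ_{ZZ'AB} = V ρ_AB V† (with V the Stinespring isometry of measurement Z), ρ_XB = Tr_{X'A}(U ρ_AB U†), σ_B = Tr_{Z'A} σ_{Z'AB}, and c = max_{x,z}‖√(M_x)√(N_z)‖∞². -/

import Mathlib

open scoped Matrix.Norms.L2Operator Kronecker ComplexOrder
open Matrix Finset

noncomputable section

namespace Matrix.PosSemidef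

/-- The positive semidefinite square root (no longer in Mathlib; old definition restored). -/
def sqrt {n 𝕜 : Type*} [Fintype n] [DecidableEq n] [RCLike 𝕜] {A : Matrix n n 𝕜}
    (hA : A.PosSemidef) : Matrix n n 𝕜 :=
  (hA.1.eigenvectorUnitary : Matrix n n 𝕜) *
    diagonal ((↑) ∘ (Real.sqrt ∘ hA.1.eigenvalues)) *
    (star hA.1.eigenvectorUnitary : Matrix n n 𝕜)

lemma posSemidef_sqrt {n 𝕜 : Type*} [Fintype n] [DecidableEq n] [RCLike 𝕜] {A : Matrix n n 𝕜}
    (hA : A.PosSemidef) : hA.sqrt.PosSemidef := by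
  unfold sqrt
  have hd : (diagonal ((↑) ∘ (Real.sqrt ∘ hA.1.eigenvalues)) : Matrix n n 𝕜).PosSemidef :=
    PosSemidef.diagonal (fun i => RCLike.ofReal_nonneg.mpr (Real.sqrt_nonneg _))
  have := hd.mul_mul_conjTranspose_same (hA.1.eigenvectorUnitary : Matrix n n 𝕜)
  simpa [Matrix.star_eq_conjTranspose] using this

lemma sqrt_mul_self {n 𝕜 : Type*} [Fintype n] [DecidableEq n] [RCLike 𝕜] {A : Matrix n n 𝕜}
    (hA : A.PosSemidef) : hA.sqrt * hA.sqrt = A := by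
  have hU : (star hA.1.eigenvectorUnitary : Matrix n n 𝕜) *
      (hA.1.eigenvectorUnitary : Matrix n n 𝕜) = 1 := by simp
  have hD : diagonal (((↑) ∘ (Real.sqrt ∘ hA.1.eigenvalues)) : n → 𝕜) *
      diagonal ((↑) ∘ (Real.sqrt ∘ hA.1.eigenvalues))
        = diagonal (RCLike.ofReal ∘ hA.1.eigenvalues) := by
    rw [diagonal_mul_diagonal]
    congr 1
    funext i
    simp only [Function.comp]
    rw [← RCLike.ofReal_mul, Real.mul_self_sqrt (hA.eigenvalues_nonneg i)]
  conv_rhs => rw [hA.1.spectral_theorem, Unitary.conjStarAlgAut_apply]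
  unfold sqrt
  rw [← hD]
  simp only [Matrix.mul_assoc]
  rw [← Matrix.mul_assoc (star hA.1.eigenvectorUnitary : Matrix n n 𝕜)
    (hA.1.eigenvectorUnitary : Matrix n n 𝕜), hU, Matrix.one_mul]

end Matrix.PosSemidef

/-- The Loewner order: `A ≤ B` iff `B - A` is positive semi-definite. -/
def LoewnerLE {n : Type*} [Fintype n] (A B : Matrix n n ℂ) : Prop := (B - A).PosSemidef

/-- Stinespring dilation isometry `Σ_x |x⟩⊗|x⟩⊗√(M_x) : H_A → H_X ⊗ H_{X'} ⊗ H_A`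
of the POVM `{M_x}`. -/
def dilation {n F : Type*} [Fintype n] [DecidableEq n] [Fintype F] [DecidableEq F]
    {M : F → Matrix n n ℂ} (hM : ∀ x, (M x).PosSemidef) :
    Matrix ((F × F) × n) n ℂ :=
  Matrix.of fun p j => if p.1.1 = p.1.2 then (hM p.1.1).sqrt p.2 j else 0

namespace ImplAux

set_option linter.unusedSectionVars false

lemma quad_conj {m k : Type*} [Fintype m] [Fintype k] (W : Matrix m k ℂ) (A : Matrix k k ℂ)
    (u : m → ℂ) :
    star u ⬝ᵥ (W * A * Wᴴ) *ᵥ u = star (Wᴴ *ᵥ u) ⬝ᵥ A *ᵥ (Wᴴ *ᵥ u) := by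
  simp [dotProduct_mulVec, star_mulVec, vecMul_vecMul, Matrix.mul_assoc]

lemma star_dp {κ : Type*} [Fintype κ] (y : κ → ℂ) :
    star y ⬝ᵥ y = ((‖(EuclideanSpace.equiv κ ℂ).symm y‖^2 : ℝ) : ℂ) := by
  rw [EuclideanSpace.norm_eq, Real.sq_sqrt (by positivity)]
  push_cast
  simp [dotProduct, Complex.star_def, Complex.normSq_eq_norm_sq, mul_comm, Complex.mul_conj']

lemma smul_one_sub_psd {k : Type*} [Fintype k] [DecidableEq k] (A : Matrix k k ℂ) :
    (((‖Aᴴ‖^2 : ℝ) : ℂ) • (1 : Matrix k k ℂ) - A * Aᴴ).PosSemidef := by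
  refine PosSemidef.of_dotProduct_mulVec_nonneg ?_ ?_
  · refine IsHermitian.sub ?_ ?_
    · simp [IsHermitian, conjTranspose_smul, Complex.star_def, Complex.conj_ofReal]
    · simp [IsHermitian, conjTranspose_mul]
  · intro x
    have h2 : star x ⬝ᵥ (A * Aᴴ) *ᵥ x = star (Aᴴ *ᵥ x) ⬝ᵥ (Aᴴ *ᵥ x) := by
      simpa using quad_conj A 1 x
    rw [sub_mulVec, dotProduct_sub, h2, smul_mulVec, one_mulVec, dotProduct_smul,
      star_dp, star_dp]
    have hb2 : ‖(EuclideanSpace.equiv k ℂ).symm (Aᴴ *ᵥ x)‖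
        ≤ ‖Aᴴ‖ * ‖(EuclideanSpace.equiv k ℂ).symm x‖ :=
      Aᴴ.l2_opNorm_mulVec ((EuclideanSpace.equiv k ℂ).symm x)
    have h3 : (0:ℝ) ≤ ‖(EuclideanSpace.equiv k ℂ).symm (Aᴴ *ᵥ x)‖ := norm_nonneg _
    rw [smul_eq_mul, ← Complex.ofReal_mul, ← Complex.ofReal_sub, Complex.zero_le_real]
    nlinarith [norm_nonneg ((EuclideanSpace.equiv k ℂ).symm x), norm_nonneg Aᴴ]

lemma psd_trace_nonneg {k : Type*} [Fintype k] [DecidableEq k] {P : Matrix k k ℂ}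
    (hP : P.PosSemidef) : 0 ≤ P.trace := by
  rw [Matrix.trace]
  apply Finset.sum_nonneg
  intro i _
  have := hP.dotProduct_mulVec_nonneg (Pi.single i 1)
  simpa [dotProduct, mulVec, Pi.single_apply, Matrix.diag] using this

lemma trace_AAH_mul_le {k : Type*} [Fintype k] [DecidableEq k] (A : Matrix k k ℂ)
    {P : Matrix k k ℂ} (hP : P.PosSemidef) :
    (A * Aᴴ * P).trace ≤ ((‖Aᴴ‖^2 : ℝ) : ℂ) * P.trace := by
  set R := hP.sqrt with hRdef
  have hR : R.PosSemidef := hP.posSemidef_sqrt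
  have hRH : Rᴴ = R := hR.1
  have h0 := (smul_one_sub_psd A).mul_mul_conjTranspose_same R
  rw [hRH] at h0
  have h1 := psd_trace_nonneg h0
  have h2 : R * (((‖Aᴴ‖^2 : ℝ) : ℂ) • (1 : Matrix k k ℂ) - A * Aᴴ) * R
      = ((‖Aᴴ‖^2 : ℝ) : ℂ) • (R * R) - R * (A * Aᴴ) * R := by
    rw [Matrix.mul_sub, Matrix.sub_mul, mul_smul_comm, smul_mul_assoc, Matrix.mul_one]
  rw [h2, trace_sub, trace_smul, sub_nonneg] at h1
  have hRR : R * R = P := by rw [hRdef]; exact hP.sqrt_mul_self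
  have h3 : (R * (A * Aᴴ) * R).trace = (A * Aᴴ * P).trace := by
    rw [trace_mul_cycle, trace_mul_comm, hRR]
  rw [h3, hRR, smul_eq_mul] at h1
  exact h1

section Main

variable {n b F G : Type*} [Fintype n] [DecidableEq n] [Fintype b] [DecidableEq b]
  [Fintype F] [DecidableEq F] [Fintype G] [DecidableEq G]

lemma quad_expand {κ : Type*} [Fintype κ] (B : Matrix κ κ ℂ) (w : κ → ℂ) :
    star w ⬝ᵥ B *ᵥ w = ∑ r, ∑ s, star (w r) * B r s * w s := by
  simp [dotProduct, mulVec, Finset.mul_sum, mul_assoc]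

lemma sum_mulVec' {κ ι : Type*} [Fintype κ] [Fintype ι] (M : ι → Matrix κ κ ℂ) (v : κ → ℂ) :
    (∑ y, M y) *ᵥ v = ∑ y, M y *ᵥ v := by
  funext r
  simp [mulVec, dotProduct, Matrix.sum_apply, Finset.sum_mul]
  exact Finset.sum_comm

lemma dotProduct_sum' {κ ι : Type*} [Fintype κ] [Fintype ι] (v : κ → ℂ) (w : ι → κ → ℂ) :
    v ⬝ᵥ (∑ y, w y) = ∑ y, v ⬝ᵥ w y := by
  simp [dotProduct, Finset.mul_sum]
  exact Finset.sum_comm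

lemma quad_double_sum {κ : Type*} [Fintype κ] (M : F → n → Matrix κ κ ℂ) (v : κ → ℂ) :
    star v ⬝ᵥ (∑ x' : F, ∑ i : n, M x' i) *ᵥ v
      = ∑ x' : F, ∑ i : n, star v ⬝ᵥ (M x' i) *ᵥ v := by
  rw [sum_mulVec', dotProduct_sum']
  exact Finset.sum_congr rfl fun x' _ => by rw [sum_mulVec', dotProduct_sum']

/-- compression matrix extracting the `(x', i)` slice -/
def liftC (x' : F) (i : n) : Matrix (F × b) (((F × F) × n) × b) ℂ :=
  Matrix.of fun p r => if r = (((p.1, x'), i), p.2) then 1 else 0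

lemma liftC_sandwich_apply (x' : F) (i : n) (B : Matrix (((F × F) × n) × b) (((F × F) × n) × b) ℂ)
    (p q : F × b) :
    ((liftC (b := b) x' i * B * (liftC (b := b) x' i)ᴴ : Matrix (F × b) (F × b) ℂ)) p q
      = B (((p.1, x'), i), p.2) (((q.1, x'), i), q.2) := by
  simp [liftC, Matrix.mul_apply, conjTranspose_apply, apply_ite (star : ℂ → ℂ),
    ite_mul, mul_ite, mul_zero, zero_mul, Finset.sum_ite_eq', Finset.sum_ite_eq]

lemma rhoX_eq (B : Matrix (((F × F) × n) × b) (((F × F) × n) × b) ℂ) :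
    (Matrix.of fun (p q : F × b) =>
        ∑ x' : F, ∑ i : n, B (((p.1, x'), i), p.2) (((q.1, x'), i), q.2))
      = ∑ x' : F, ∑ i : n, liftC (b := b) x' i * B * (liftC (b := b) x' i)ᴴ := by
  ext p q
  simp [Matrix.sum_apply, liftC_sandwich_apply]

lemma liftC_conjT_mulVec (x' : F) (i : n) (v : F × b → ℂ) :
    (liftC (b := b) x' i)ᴴ *ᵥ v
      = fun r => if r.1.1.2 = x' ∧ r.1.2 = i then v (r.1.1.1, r.2) else 0 := by
  funext r
  obtain ⟨⟨⟨x, x''⟩, i''⟩, β⟩ := r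
  simp [liftC, mulVec, dotProduct, conjTranspose_apply, apply_ite (star : ℂ → ℂ),
    Prod.mk.injEq, Fintype.sum_prod_type, ite_and, Finset.sum_ite_eq, Finset.sum_ite_eq',
    ite_mul, mul_ite, mul_zero, zero_mul, and_comm]

def avec (S : Matrix n n ℂ) (v : F × b → ℂ) (x : F) (i : n) : n × b → ℂ :=
  fun jβ => S jβ.1 i * v (x, jβ.2)

def uvec (A : G → Matrix n n ℂ) (v : F × b → ℂ) (x : F) (i : n) : ((G × G) × n) × b → ℂ :=
  fun r => if r.1.1.1 = r.1.1.2 then A r.1.1.1 r.1.2 i * v (x, r.2) else 0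

def Iσm (σ : Matrix ((G × n) × b) ((G × n) × b) ℂ) :
    Matrix (((G × G) × n) × b) (((G × G) × n) × b) ℂ :=
  Matrix.of fun r s => if r.1.1.1 = s.1.1.1 then
    σ ((r.1.1.2, r.1.2), r.2) ((s.1.1.2, s.1.2), s.2) else 0

def Pm (σ : Matrix ((G × n) × b) ((G × n) × b) ℂ) (v : F × b → ℂ) (x : F) (z : G) :
    Matrix n n ℂ :=
  Matrix.of fun k m => ∑ γ, ∑ δ, star (v (x, γ)) * σ ((z, k), γ) ((z, m), δ) * v (x, δ)

lemma WM_conjT_mulVec {M : F → Matrix n n ℂ} (hM : ∀ x, (M x).PosSemidef)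
    (v : F × b → ℂ) (x' : F) (i : n) :
    (dilation hM ⊗ₖ (1 : Matrix b b ℂ))ᴴ *ᵥ
      (fun r : ((F × F) × n) × b => if r.1.1.2 = x' ∧ r.1.2 = i then v (r.1.1.1, r.2) else 0)
      = avec (hM x').sqrt v x' i := by
  funext jβ
  obtain ⟨j, β⟩ := jβ
  have hherm : ∀ a c : n, star ((hM x').sqrt a c) = (hM x').sqrt c a := fun a c =>
    congrFun (congrFun (hM x').posSemidef_sqrt.1 c) a
  simp [mulVec, dotProduct, conjTranspose_apply, dilation, kroneckerMap_apply, one_apply,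
    Fintype.sum_prod_type, avec, apply_ite (star : ℂ → ℂ), ite_and,
    ite_mul, mul_ite, mul_zero, zero_mul, Finset.sum_ite_eq, Finset.sum_ite_eq', hherm]
  exact Or.inl (hherm i j)

lemma WN_conjT_mulVec {N : G → Matrix n n ℂ} (hN : ∀ z, (N z).PosSemidef)
    (hNsum : ∑ z, N z = 1) (S : Matrix n n ℂ) (v : F × b → ℂ) (x : F) (i : n) :
    (dilation hN ⊗ₖ (1 : Matrix b b ℂ))ᴴ *ᵥ uvec (fun z => (hN z).sqrt * S) v x i
      = avec S v x i := by
  funext jβ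
  obtain ⟨j, β⟩ := jβ
  have hherm : ∀ (z : G) (a c : n), star ((hN z).sqrt a c) = (hN z).sqrt c a := fun z a c =>
    congrFun (congrFun (hN z).posSemidef_sqrt.1 c) a
  have step1 : ∀ z : G, ∑ k, (hN z).sqrt j k * (((hN z).sqrt * S) k i * v (x, β))
      = (N z * S) j i * v (x, β) := by
    intro z
    simp only [← mul_assoc, ← Finset.sum_mul]
    congr 1
    rw [← Matrix.mul_apply, ← Matrix.mul_assoc, (hN z).sqrt_mul_self]
  have step2 : ∑ z, (N z * S) j i = S j i := by
    rw [← Matrix.sum_apply, ← Finset.sum_mul, hNsum, Matrix.one_mul]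
  calc ((dilation hN ⊗ₖ (1 : Matrix b b ℂ))ᴴ *ᵥ uvec (fun z => (hN z).sqrt * S) v x i) (j, β)
      = ∑ z : G, ∑ k : n, (hN z).sqrt j k * (((hN z).sqrt * S) k i * v (x, β)) := by
        simp [mulVec, dotProduct, conjTranspose_apply, dilation, kroneckerMap_apply, one_apply,
          Fintype.sum_prod_type, uvec, apply_ite (star : ℂ → ℂ), ite_and,
          ite_mul, mul_ite, mul_zero, zero_mul, Finset.sum_ite_eq, Finset.sum_ite_eq', hherm,
          mul_assoc]
    _ = ∑ z : G, (N z * S) j i * v (x, β) := Finset.sum_congr rfl fun z _ => step1 z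
    _ = S j i * v (x, β) := by rw [← Finset.sum_mul, step2]
    _ = avec S v x i (j, β) := rfl

lemma uvec_quad (A : G → Matrix n n ℂ) (σ : Matrix ((G × n) × b) ((G × n) × b) ℂ)
    (v : F × b → ℂ) (x : F) (i : n) :
    star (uvec A v x i) ⬝ᵥ Iσm σ *ᵥ uvec A v x i
      = ∑ z, ∑ k, ∑ γ, ∑ m, ∑ δ,
          star (A z k i) * star (v (x, γ)) * σ ((z, k), γ) ((z, m), δ) * (A z m i * v (x, δ)) := by
  rw [quad_expand]
  simp [uvec, Iσm, Fintype.sum_prod_type, apply_ite (star : ℂ → ℂ), ite_and,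
    ite_mul, mul_ite, mul_zero, zero_mul, Finset.sum_ite_eq, Finset.sum_ite_eq', star_mul']

lemma trace_expand (A : Matrix n n ℂ) (σ : Matrix ((G × n) × b) ((G × n) × b) ℂ)
    (v : F × b → ℂ) (x : F) (z : G) :
    (A * Aᴴ * Pm σ v x z).trace
      = ∑ i, ∑ k, ∑ γ, ∑ m, ∑ δ,
          star (A k i) * star (v (x, γ)) * σ ((z, k), γ) ((z, m), δ) * (A m i * v (x, δ)) := by
  simp only [Matrix.trace, Matrix.diag, Matrix.mul_apply, Pm, Matrix.of_apply,
    conjTranspose_apply, Finset.sum_mul, Finset.mul_sum]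
  conv_lhs => enter [2]; ext m; enter [2]; ext k; enter [2]; ext γ; rw [Finset.sum_comm]
  conv_lhs => enter [2]; ext m; enter [2]; ext k; rw [Finset.sum_comm]
  conv_lhs => enter [2]; ext m; rw [Finset.sum_comm]
  conv_lhs => rw [Finset.sum_comm]
  conv_lhs => enter [2]; ext i; rw [Finset.sum_comm]
  conv_lhs => enter [2]; ext i; enter [2]; ext k; rw [Finset.sum_comm]
  refine Finset.sum_congr rfl fun i _ => Finset.sum_congr rfl fun k _ =>
    Finset.sum_congr rfl fun γ _ => Finset.sum_congr rfl fun m _ =>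
    Finset.sum_congr rfl fun δ _ => by ring

lemma sum_uvec_quad (A : G → Matrix n n ℂ) (σ : Matrix ((G × n) × b) ((G × n) × b) ℂ)
    (v : F × b → ℂ) (x : F) :
    ∑ i : n, star (uvec A v x i) ⬝ᵥ Iσm σ *ᵥ uvec A v x i
      = ∑ z : G, (A z * (A z)ᴴ * Pm σ v x z).trace := by
  calc ∑ i : n, star (uvec A v x i) ⬝ᵥ Iσm σ *ᵥ uvec A v x i
      = ∑ i : n, ∑ z : G, ∑ k, ∑ γ, ∑ m, ∑ δ,
          star (A z k i) * star (v (x, γ)) * σ ((z, k), γ) ((z, m), δ) * (A z m i * v (x, δ)) :=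
        Finset.sum_congr rfl fun i _ => uvec_quad A σ v x i
    _ = ∑ z : G, ∑ i : n, ∑ k, ∑ γ, ∑ m, ∑ δ,
          star (A z k i) * star (v (x, γ)) * σ ((z, k), γ) ((z, m), δ) * (A z m i * v (x, δ)) :=
        Finset.sum_comm
    _ = ∑ z : G, (A z * (A z)ᴴ * Pm σ v x z).trace :=
        Finset.sum_congr rfl fun z _ => (trace_expand (A z) σ v x z).symm

def Em (z : G) (x : F) (v : F × b → ℂ) : Matrix ((G × n) × b) n ℂ :=
  Matrix.of fun s k => if s.1.1 = z ∧ s.1.2 = k then v (x, s.2) else 0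

lemma Pm_eq (σ : Matrix ((G × n) × b) ((G × n) × b) ℂ) (v : F × b → ℂ) (x : F) (z : G) :
    Pm σ v x z = (Em (n := n) z x v)ᴴ * σ * Em (n := n) z x v := by
  ext k m
  simp [Pm, Em, Matrix.mul_apply, conjTranspose_apply, Fintype.sum_prod_type, ite_and,
    apply_ite (star : ℂ → ℂ), ite_mul, mul_ite, mul_zero, zero_mul,
    Finset.sum_ite_eq, Finset.sum_ite_eq', Finset.sum_mul, Finset.mul_sum, mul_assoc]
  exact Finset.sum_comm

lemma Pm_posSemidef {σ : Matrix ((G × n) × b) ((G × n) × b) ℂ} (hσ : σ.PosSemidef)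
    (v : F × b → ℂ) (x : F) (z : G) : (Pm σ v x z).PosSemidef := by
  rw [Pm_eq]
  exact hσ.conjTranspose_mul_mul_same (Em z x v)

lemma sum_Pm_trace (σ : Matrix ((G × n) × b) ((G × n) × b) ℂ) (v : F × b → ℂ) (x : F) :
    ∑ z : G, (Pm σ v x z).trace
      = ∑ γ, ∑ δ, star (v (x, γ)) * (∑ r : G × n, σ (r, γ) (r, δ)) * v (x, δ) := by
  simp only [Matrix.trace, Matrix.diag, Pm, Matrix.of_apply, Fintype.sum_prod_type,
    Finset.sum_mul, Finset.mul_sum]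
  conv_rhs => enter [2]; ext γ; rw [Finset.sum_comm]
  conv_rhs => rw [Finset.sum_comm]
  conv_rhs => enter [2]; ext z; enter [2]; ext γ; rw [Finset.sum_comm]
  conv_rhs => enter [2]; ext z; rw [Finset.sum_comm]

lemma kron_one_quad (σB : Matrix b b ℂ) (v : F × b → ℂ) :
    star v ⬝ᵥ ((1 : Matrix F F ℂ) ⊗ₖ σB) *ᵥ v
      = ∑ x : F, ∑ γ, ∑ δ, star (v (x, γ)) * σB γ δ * v (x, δ) := by
  rw [quad_expand]
  simp [kroneckerMap_apply, one_apply, Fintype.sum_prod_type, ite_mul, mul_ite,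
    mul_zero, zero_mul, Finset.sum_ite_eq, Finset.sum_ite_eq']

lemma kron_one_herm {σB : Matrix b b ℂ} (hσB : ∀ β γ, star (σB β γ) = σB γ β) :
    ((1 : Matrix F F ℂ) ⊗ₖ σB).IsHermitian := by
  ext ⟨x, β⟩ ⟨y, γ⟩
  by_cases hxy : x = y <;>
    simp [conjTranspose_apply, kroneckerMap_apply, one_apply, hxy, eq_comm, hσB]

end Main

end ImplAux

open ImplAux

/-- Implication step of the uncertainty relation proof:
`2^{-λ} I_Z ⊗ σ_{Z'AB} ≥ ρ_{ZZ'AB}` implies `2^{-λ}·c· I_X ⊗ σ_B ≥ ρ_XB`,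
where `ρ_{ZZ'AB} = (V ⊗ I_B) ρ_AB (V ⊗ I_B)†`, `ρ_XB = Tr_{X'A}((U ⊗ I_B) ρ_AB (U ⊗ I_B)†)`,
`σ_B = Tr_{Z'A} σ_{Z'AB}`, and `c = max_{x,z} ‖√(M_x)√(N_z)‖∞²`. -/
theorem implication_step {n b F G : Type*} [Fintype n] [DecidableEq n]
    [Fintype b] [DecidableEq b] [Fintype F] [DecidableEq F] [Nonempty F]
    [Fintype G] [DecidableEq G] [Nonempty G]
    (M : F → Matrix n n ℂ) (N : G → Matrix n n ℂ)
    (hM : ∀ x, (M x).PosSemidef) (hN : ∀ z, (N z).PosSemidef)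
    (hMsum : ∑ x, M x = 1) (hNsum : ∑ z, N z = 1)
    (ρ : Matrix (n × b) (n × b) ℂ) (hρ : ρ.PosSemidef) (htr : ρ.trace.re ≤ 1)
    (σ : Matrix ((G × n) × b) ((G × n) × b) ℂ) (hσ : σ.PosSemidef)
    (hσtr : σ.trace = 1) (l : ℝ)
    (h : LoewnerLE
      ((dilation hN ⊗ₖ (1 : Matrix b b ℂ)) * ρ * (dilation hN ⊗ₖ (1 : Matrix b b ℂ))ᴴ)
      (((2 : ℝ) ^ (-l)) •
        Matrix.of fun (r s : ((G × G) × n) × b) =>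
          if r.1.1.1 = s.1.1.1 then
            σ ((r.1.1.2, r.1.2), r.2) ((s.1.1.2, s.1.2), s.2) else 0)) :
    LoewnerLE
      (Matrix.of fun (p q : F × b) =>
        ∑ x' : F, ∑ i : n,
          ((dilation hM ⊗ₖ (1 : Matrix b b ℂ)) * ρ *
              (dilation hM ⊗ₖ (1 : Matrix b b ℂ))ᴴ)
            (((p.1, x'), i), p.2) (((q.1, x'), i), q.2))
      ((((2 : ℝ) ^ (-l)) *
          ((univ : Finset (F × G)).sup' univ_nonempty
            fun p => ‖(hM p.1).sqrt * (hN p.2).sqrt‖ ^ 2)) •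
        ((1 : Matrix F F ℂ) ⊗ₖ
          Matrix.of fun β γ : b => ∑ r : G × n, σ (r, β) (r, γ))) := by
  classical
  unfold LoewnerLE at h ⊢
  have h' : (((2 : ℝ) ^ (-l)) • Iσm σ -
      (dilation hN ⊗ₖ (1 : Matrix b b ℂ)) * ρ * (dilation hN ⊗ₖ (1 : Matrix b b ℂ))ᴴ).PosSemidef := h
  set r : ℝ := (2 : ℝ) ^ (-l) with hrdef
  set c : ℝ := ((univ : Finset (F × G)).sup' univ_nonempty
      fun p => ‖(hM p.1).sqrt * (hN p.2).sqrt‖ ^ 2) with hcdef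
  have hr0 : (0:ℝ) ≤ r := by rw [hrdef]; positivity
  have hcle : ∀ (x : F) (z : G), ‖(hM x).sqrt * (hN z).sqrt‖^2 ≤ c := fun x z =>
    Finset.le_sup' (f := fun p : F × G => ‖(hM p.1).sqrt * (hN p.2).sqrt‖ ^ 2) (mem_univ (x,z))
  have hc0 : (0:ℝ) ≤ c := le_trans (by positivity) (hcle (Classical.arbitrary F) (Classical.arbitrary G))
  have hσe : ∀ s t, star (σ s t) = σ t s := fun s t => congrFun (congrFun hσ.1 t) s
  have hSH : ∀ x : F, ((hM x).sqrt)ᴴ = (hM x).sqrt := fun x => (hM x).posSemidef_sqrt.1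
  have hTH : ∀ z : G, ((hN z).sqrt)ᴴ = (hN z).sqrt := fun z => (hN z).posSemidef_sqrt.1
  set σBm : Matrix b b ℂ := Matrix.of fun β γ : b => ∑ r : G × n, σ (r, β) (r, γ) with hσBdef
  set Big : Matrix (((F × F) × n) × b) (((F × F) × n) × b) ℂ :=
    (dilation hM ⊗ₖ (1 : Matrix b b ℂ)) * ρ * (dilation hM ⊗ₖ (1 : Matrix b b ℂ))ᴴ with hBigdef
  have hσBH : ∀ β γ, star (σBm β γ) = σBm γ β := by
    intro β γ
    simp only [hσBdef, Matrix.of_apply, star_sum, hσe]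
  refine PosSemidef.of_dotProduct_mulVec_nonneg ?_ ?_
  · -- Hermitian part
    apply IsHermitian.sub
    · have h1 : ((1 : Matrix F F ℂ) ⊗ₖ σBm).IsHermitian := kron_one_herm hσBH
      show _ = _
      rw [conjTranspose_smul, star_trivial, h1.eq]
    · have hBig : Big.IsHermitian := by
        rw [hBigdef]
        exact isHermitian_mul_mul_conjTranspose _ hρ.1
      show _ = _
      rw [rhoX_eq Big, conjTranspose_sum]
      refine Finset.sum_congr rfl fun x' _ => ?_
      rw [conjTranspose_sum]
      exact Finset.sum_congr rfl fun i _ =>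
        (isHermitian_mul_mul_conjTranspose _ hBig).eq
  · -- quadratic form part
    intro v
    rw [sub_mulVec, dotProduct_sub, sub_nonneg]
    have hq1 : star v ⬝ᵥ (Matrix.of fun p q : F × b =>
          ∑ x' : F, ∑ i : n, Big (((p.1, x'), i), p.2) (((q.1, x'), i), q.2)) *ᵥ v
        = ∑ x' : F, ∑ i : n,
            star (avec (hM x').sqrt v x' i) ⬝ᵥ ρ *ᵥ avec (hM x').sqrt v x' i := by
      rw [rhoX_eq Big, quad_double_sum]
      refine Finset.sum_congr rfl fun x' _ => Finset.sum_congr rfl fun i _ => ?_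
      rw [quad_conj, liftC_conjT_mulVec, hBigdef, quad_conj, WM_conjT_mulVec hM v x' i]
    have hq2 : ∀ (x : F) (i : n),
        star (avec (hM x).sqrt v x i) ⬝ᵥ ρ *ᵥ avec (hM x).sqrt v x i
          = star (uvec (fun z => (hN z).sqrt * (hM x).sqrt) v x i) ⬝ᵥ
              ((dilation hN ⊗ₖ (1 : Matrix b b ℂ)) * ρ *
                (dilation hN ⊗ₖ (1 : Matrix b b ℂ))ᴴ) *ᵥ
              uvec (fun z => (hN z).sqrt * (hM x).sqrt) v x i := by
      intro x i
      rw [quad_conj, WN_conjT_mulVec hN hNsum]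
    have hq3 : ∀ u : ((G × G) × n) × b → ℂ,
        star u ⬝ᵥ ((dilation hN ⊗ₖ (1 : Matrix b b ℂ)) * ρ *
            (dilation hN ⊗ₖ (1 : Matrix b b ℂ))ᴴ) *ᵥ u
          ≤ (r : ℂ) * (star u ⬝ᵥ Iσm σ *ᵥ u) := by
      intro u
      have h0 := h'.dotProduct_mulVec_nonneg u
      rw [sub_mulVec, dotProduct_sub, sub_nonneg, smul_mulVec, dotProduct_smul] at h0
      rwa [Complex.real_smul] at h0
    have hq5 : ∀ (x : F) (z : G),
        (((hN z).sqrt * (hM x).sqrt) * (((hN z).sqrt * (hM x).sqrt))ᴴ * Pm σ v x z).trace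
          ≤ (c : ℂ) * (Pm σ v x z).trace := by
      intro x z
      have hp := Pm_posSemidef (σ := σ) hσ v x z
      refine le_trans (trace_AAH_mul_le _ hp) ?_
      have he : (((hN z).sqrt * (hM x).sqrt))ᴴ = (hM x).sqrt * (hN z).sqrt := by
        rw [conjTranspose_mul, hSH, hTH]
      rw [he]
      exact mul_le_mul_of_nonneg_right (Complex.real_le_real.mpr (hcle x z))
        (psd_trace_nonneg hp)
    have hr0' : (0 : ℂ) ≤ (r : ℂ) := Complex.zero_le_real.mpr hr0
    have hq7 : star v ⬝ᵥ ((r * c) • ((1 : Matrix F F ℂ) ⊗ₖ σBm)) *ᵥ v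
        = ((r : ℂ) * (c : ℂ)) * ∑ x : F, ∑ γ, ∑ δ,
            star (v (x, γ)) * σBm γ δ * v (x, δ) := by
      rw [smul_mulVec, dotProduct_smul, Complex.real_smul, kron_one_quad]
      push_cast
      ring
    calc star v ⬝ᵥ (Matrix.of fun p q : F × b =>
          ∑ x' : F, ∑ i : n, Big (((p.1, x'), i), p.2) (((q.1, x'), i), q.2)) *ᵥ v
        = ∑ x : F, ∑ i : n,
            star (avec (hM x).sqrt v x i) ⬝ᵥ ρ *ᵥ avec (hM x).sqrt v x i := hq1
      _ = ∑ x : F, ∑ i : n,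
            star (uvec (fun z => (hN z).sqrt * (hM x).sqrt) v x i) ⬝ᵥ
              ((dilation hN ⊗ₖ (1 : Matrix b b ℂ)) * ρ *
                (dilation hN ⊗ₖ (1 : Matrix b b ℂ))ᴴ) *ᵥ
              uvec (fun z => (hN z).sqrt * (hM x).sqrt) v x i :=
          Finset.sum_congr rfl fun x _ => Finset.sum_congr rfl fun i _ => hq2 x i
      _ ≤ ∑ x : F, ∑ i : n, (r : ℂ) *
            (star (uvec (fun z => (hN z).sqrt * (hM x).sqrt) v x i) ⬝ᵥ Iσm σ *ᵥ
              uvec (fun z => (hN z).sqrt * (hM x).sqrt) v x i) :=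
          Finset.sum_le_sum fun x _ => Finset.sum_le_sum fun i _ => hq3 _
      _ = ∑ x : F, (r : ℂ) * ∑ z : G,
            (((hN z).sqrt * (hM x).sqrt) * (((hN z).sqrt * (hM x).sqrt))ᴴ *
              Pm σ v x z).trace := by
          refine Finset.sum_congr rfl fun x _ => ?_
          rw [← Finset.mul_sum, sum_uvec_quad]
      _ ≤ ∑ x : F, (r : ℂ) * ((c : ℂ) * ∑ z : G, (Pm σ v x z).trace) := by
          refine Finset.sum_le_sum fun x _ => mul_le_mul_of_nonneg_left ?_ hr0'
          rw [Finset.mul_sum]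
          exact Finset.sum_le_sum fun z _ => hq5 x z
      _ = ((r : ℂ) * (c : ℂ)) * ∑ x : F, ∑ γ, ∑ δ,
            star (v (x, γ)) * σBm γ δ * v (x, δ) := by
          rw [Finset.mul_sum]
          refine Finset.sum_congr rfl fun x _ => ?_
          rw [sum_Pm_trace]
          ring_nf
          rfl
      _ = star v ⬝ᵥ ((r * c) • ((1 : Matrix F F ℂ) ⊗ₖ σBm)) *ᵥ v := hq7.symm
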